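/- arXiv:2102.03203 — 2 statements merged into one kernel-verified Lean document; each statement's English description precedes it below -/
import Mathlib

section
/- Let A be an associative ℚ(v)-algebra containing invertible central elements C, K and families of elements B_k (k ∈ ℤ), B'_l (l ∈ ℤ), Θ_m (m ∈ ℤ, with Θ₀ = (v−v^{-1})^{-1} and Θ_m = 0 for m < 0), and let a = v^{c} for a fixed integer c ≤ 0. Assume: (i) for all k, l: [B_k, B'_{l+1}]_{a^{-1}} − a^{-1}·[B_{k+1}, B'_l]_a = 0; (ii) for all k, l: [B_k, B_{l+1}]_{v^{-2}} − v^{-2}·[B_{k+1}, B_l]_{v²} = v^{-2}·Θ_{l-k+1}·C^k·K − v^{-4}·Θ_{l-k-1}·C^{k+1}·K + v^{-2}·Θ_{k-l+1}·C^l·K − v^{-4}·Θ_{k-l-1}·C^{l+1}·K. Define Y_{k,l} := [Θ_k, B'_l] + [Θ_{k-2}, B'_l]·C − a·[Θ_{k-1}, B'_{l+1}]_{a^{-2}} − a^{-1}·[Θ_{k-1}, B'_{l-1}]_{a²}·C. Then for every integer l and every k with k > 1 or k = 0, one has Y_{k+2,l} = v^{-2}·Y_{k,l}·C. -/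
noncomputable section

/-- The field `ℚ(v)` of rational functions. -/
abbrev F : Type := RatFunc ℚ

/-- The variable `v`. -/
def v : F := RatFunc.X

/-- The `c`-deformed bracket `[x,y]_c := x*y - c • (y*x)`; `[x,y] = [x,y]_1`. -/
def qbr {A : Type*} [Ring A] [Algebra F A] (c : F) (x y : A) : A :=
  x * y - c • (y * x)

/-- `Y_{k,l} := [Θ_k, B'_l] + [Θ_{k-2}, B'_l] C − a [Θ_{k-1}, B'_{l+1}]_{a⁻²}
− a⁻¹ [Θ_{k-1}, B'_{l-1}]_{a²} C`. -/
def Ydef {A : Type*} [Ring A] [Algebra F A] (Θ B' : ℤ → A) (C : Aˣ) (a : F)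
    (k l : ℤ) : A :=
  qbr 1 (Θ k) (B' l) + qbr 1 (Θ (k - 2)) (B' l) * (C : A)
    - a • qbr (a⁻¹ ^ 2) (Θ (k - 1)) (B' (l + 1))
    - a⁻¹ • (qbr (a ^ 2) (Θ (k - 1)) (B' (l - 1)) * (C : A))

/-- Generic version of `qbr` over an arbitrary field of scalars. -/
def gqbr {S : Type*} [Field S] {A : Type*} [Ring A] [Algebra S A] (c : S) (x y : A) : A :=
  x * y - c • (y * x)

/-- Generic version of `Ydef` over an arbitrary field of scalars. -/
def gY {S : Type*} [Field S] {A : Type*} [Ring A] [Algebra S A] (Θ B' : ℤ → A) (C : Aˣ)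
    (a : S) (k l : ℤ) : A :=
  gqbr (1 : S) (Θ k) (B' l) + gqbr (1 : S) (Θ (k - 2)) (B' l) * (C : A)
    - a • gqbr (a⁻¹ ^ 2) (Θ (k - 1)) (B' (l + 1))
    - a⁻¹ • (gqbr (a ^ 2) (Θ (k - 1)) (B' (l - 1)) * (C : A))

set_option maxHeartbeats 2000000 in
theorem aux {S : Type} [Field S] {A : Type*} [Ring A] [Algebra S A] (C K : Aˣ)
    (hC : ∀ x : A, (C : A) * x = x * (C : A)) (hK : ∀ x : A, (K : A) * x = x * (K : A))
    (B B' : ℤ → A) (Θ : ℤ → A) (w : S) (hw : w ≠ 0) (h2ne : (2 : S) ≠ 0)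
    (hΘ0 : ∃ s : S, Θ 0 = s • (1 : A)) (hΘneg : ∀ m : ℤ, m < 0 → Θ m = 0)
    (a : S) (ha0 : a ≠ 0)
    (h1 : ∀ k l : ℤ, gqbr a⁻¹ (B k) (B' (l + 1)) - a⁻¹ • gqbr a (B (k + 1)) (B' l) = 0)
    (h2 : ∀ k l : ℤ,
      gqbr (w⁻¹ ^ 2) (B k) (B (l + 1)) - (w⁻¹ ^ 2) • gqbr (w ^ 2) (B (k + 1)) (B l)
        = (w⁻¹ ^ 2) • (Θ (l - k + 1) * ((C ^ k : Aˣ) : A) * (K : A))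
          - (w⁻¹ ^ 4) • (Θ (l - k - 1) * ((C ^ (k + 1) : Aˣ) : A) * (K : A))
          + (w⁻¹ ^ 2) • (Θ (k - l + 1) * ((C ^ l : Aˣ) : A) * (K : A))
          - (w⁻¹ ^ 4) • (Θ (k - l - 1) * ((C ^ (l + 1) : Aˣ) : A) * (K : A))) :
    ∀ l k : ℤ, (1 < k ∨ k = 0) →
      gY Θ B' C a (k + 2) l = (w⁻¹ ^ 2) • (gY Θ B' C a k l * (C : A)) := by
  obtain ⟨s₀, hs₀⟩ := hΘ0
  -- commutation helpers
  have hCB : ∀ n : ℤ, (C : A) * B' n = B' n * (C : A) := fun n => hC _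
  have hCB' : ∀ (n : ℤ) (z : A), (C : A) * (B' n * z) = B' n * ((C : A) * z) := fun n z => by
    rw [← mul_assoc, hC, mul_assoc]
  have hKB : ∀ n : ℤ, (K : A) * B' n = B' n * (K : A) := fun n => hK _
  have hKB' : ∀ (n : ℤ) (z : A), (K : A) * (B' n * z) = B' n * ((K : A) * z) := fun n z => by
    rw [← mul_assoc, hK, mul_assoc]
  have hCT : ∀ m : ℤ, (C : A) * Θ m = Θ m * (C : A) := fun m => hC _
  have hCT' : ∀ (m : ℤ) (z : A), (C : A) * (Θ m * z) = Θ m * ((C : A) * z) := fun m z => by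
    rw [← mul_assoc, hC, mul_assoc]
  have hKT : ∀ m : ℤ, (K : A) * Θ m = Θ m * (K : A) := fun m => hK _
  have hKT' : ∀ (m : ℤ) (z : A), (K : A) * (Θ m * z) = Θ m * ((K : A) * z) := fun m z => by
    rw [← mul_assoc, hK, mul_assoc]
  have hCz : ∀ (m : ℤ) (x : A), ((C ^ m : Aˣ) : A) * x = x * ((C ^ m : Aˣ) : A) := fun m x =>
    ((Commute.units_zpow_right ((hC x).symm) m).eq).symm
  have hCzB : ∀ m n : ℤ, ((C ^ m : Aˣ) : A) * B' n = B' n * ((C ^ m : Aˣ) : A) := fun m n =>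
    hCz m _
  have hCzB' : ∀ (m n : ℤ) (z : A),
      ((C ^ m : Aˣ) : A) * (B' n * z) = B' n * (((C ^ m : Aˣ) : A) * z) := fun m n z => by
    rw [← mul_assoc, hCz, mul_assoc]
  -- the rearranged form of (iDRG2')
  have hR : ∀ q n : ℤ,
      B q * B' (n + 1) - a⁻¹ • (B' (n + 1) * B q) - a⁻¹ • (B (q + 1) * B' n)
        + B' n * B (q + 1) = 0 := by
    intro q n
    have h := h1 q n
    simp only [gqbr, smul_sub, smul_smul, inv_mul_cancel₀ ha0, one_smul] at h
    have e : B q * B' (n + 1) - a⁻¹ • (B' (n + 1) * B q) - a⁻¹ • (B (q + 1) * B' n)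
        + B' n * B (q + 1)
        = B q * B' (n + 1) - a⁻¹ • (B' (n + 1) * B q)
          - (a⁻¹ • (B (q + 1) * B' n) - B' n * B (q + 1)) := by module
    exact e.trans h
  -- the key combinatorial identity, a consequence of (iDRG2') alone
  have IdA : ∀ p q m : ℤ,
      gqbr (1 : S) ((gqbr (w⁻¹ ^ 2) (B p) (B (q + 1 + 1)) - (w⁻¹ ^ 2) • gqbr (w ^ 2) (B (p + 1)) (B (q + 1)))
          + (gqbr (w⁻¹ ^ 2) (B (p + 1)) (B (q + 1)) - (w⁻¹ ^ 2) • gqbr (w ^ 2) (B (p + 1 + 1)) (B q))) (B' m)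
        - a • gqbr (a⁻¹ ^ 2) (gqbr (w⁻¹ ^ 2) (B p) (B (q + 1)) - (w⁻¹ ^ 2) • gqbr (w ^ 2) (B (p + 1)) (B q)) (B' (m + 1))
        - a⁻¹ • gqbr (a ^ 2) (gqbr (w⁻¹ ^ 2) (B (p + 1)) (B (q + 1 + 1)) - (w⁻¹ ^ 2) • gqbr (w ^ 2) (B (p + 1 + 1)) (B (q + 1))) (B' (m - 1)) = 0 := by
    intro p q m
    have hRm : ∀ x : ℤ, B x * B' m - a⁻¹ • (B' m * B x) - a⁻¹ • (B (x + 1) * B' (m - 1))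
        + B' (m - 1) * B (x + 1) = 0 := by
      intro x
      have h := hR x (m - 1)
      rw [show m - 1 + 1 = m by ring] at h
      exact h
    trans (-(a • (B p * (B (q + 1) * B' (m + 1) - a⁻¹ • (B' (m + 1) * B (q + 1)) - a⁻¹ • (B (q + 1 + 1) * B' m) + B' m * B (q + 1 + 1))))
        - (B p * B' (m + 1) - a⁻¹ • (B' (m + 1) * B p) - a⁻¹ • (B (p + 1) * B' m) + B' m * B (p + 1)) * B (q + 1)
        + (a * w⁻¹ ^ 2) • (B (q + 1) * (B p * B' (m + 1) - a⁻¹ • (B' (m + 1) * B p) - a⁻¹ • (B (p + 1) * B' m) + B' m * B (p + 1)))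
        + (w⁻¹ ^ 2) • ((B (q + 1) * B' (m + 1) - a⁻¹ • (B' (m + 1) * B (q + 1)) - a⁻¹ • (B (q + 1 + 1) * B' m) + B' m * B (q + 1 + 1)) * B p)
        + (a * w⁻¹ ^ 2) • (B (p + 1) * (B q * B' (m + 1) - a⁻¹ • (B' (m + 1) * B q) - a⁻¹ • (B (q + 1) * B' m) + B' m * B (q + 1)))
        + (w⁻¹ ^ 2) • ((B (p + 1) * B' (m + 1) - a⁻¹ • (B' (m + 1) * B (p + 1)) - a⁻¹ • (B (p + 1 + 1) * B' m) + B' m * B (p + 1 + 1)) * B q)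
        - a • (B q * (B (p + 1) * B' (m + 1) - a⁻¹ • (B' (m + 1) * B (p + 1)) - a⁻¹ • (B (p + 1 + 1) * B' m) + B' m * B (p + 1 + 1)))
        - (B q * B' (m + 1) - a⁻¹ • (B' (m + 1) * B q) - a⁻¹ • (B (q + 1) * B' m) + B' m * B (q + 1)) * B (p + 1)
        + B (p + 1) * (B (q + 1) * B' m - a⁻¹ • (B' m * B (q + 1)) - a⁻¹ • (B (q + 1 + 1) * B' (m - 1)) + B' (m - 1) * B (q + 1 + 1))
        + a • ((B p * B' m - a⁻¹ • (B' m * B p) - a⁻¹ • (B (p + 1) * B' (m - 1)) + B' (m - 1) * B (p + 1)) * B (q + 1 + 1))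
        - (w⁻¹ ^ 2) • (B (q + 1 + 1) * (B p * B' m - a⁻¹ • (B' m * B p) - a⁻¹ • (B (p + 1) * B' (m - 1)) + B' (m - 1) * B (p + 1)))
        - (a * w⁻¹ ^ 2) • ((B (q + 1) * B' m - a⁻¹ • (B' m * B (q + 1)) - a⁻¹ • (B (q + 1 + 1) * B' (m - 1)) + B' (m - 1) * B (q + 1 + 1)) * B (p + 1))
        - (w⁻¹ ^ 2) • (B (p + 1 + 1) * (B q * B' m - a⁻¹ • (B' m * B q) - a⁻¹ • (B (q + 1) * B' (m - 1)) + B' (m - 1) * B (q + 1)))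
        - (a * w⁻¹ ^ 2) • ((B (p + 1) * B' m - a⁻¹ • (B' m * B (p + 1)) - a⁻¹ • (B (p + 1 + 1) * B' (m - 1)) + B' (m - 1) * B (p + 1 + 1)) * B (q + 1))
        + B (q + 1) * (B (p + 1) * B' m - a⁻¹ • (B' m * B (p + 1)) - a⁻¹ • (B (p + 1 + 1) * B' (m - 1)) + B' (m - 1) * B (p + 1 + 1))
        + a • ((B q * B' m - a⁻¹ • (B' m * B q) - a⁻¹ • (B (q + 1) * B' (m - 1)) + B' (m - 1) * B (q + 1)) * B (p + 1 + 1)))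
    · simp only [gqbr, mul_add, add_mul, mul_sub, sub_mul, smul_add, smul_sub, smul_smul,
        mul_smul_comm, smul_mul_assoc, mul_assoc, one_smul]
      match_scalars <;> (try field_simp) <;> (try ring)
    · rw [hR p m, hR (p + 1) m, hR q m, hR (q + 1) m, hRm p, hRm (p + 1), hRm q, hRm (q + 1)]
      simp
  intro l k hk
  apply (Units.isUnit K).mul_right_cancel
  rw [smul_mul_assoc, mul_assoc, ← sub_eq_zero]
  rcases hk with hk | hk
  · -- case 1 < k
    obtain ⟨s, hs⟩ : ∃ s : S, Θ (2 - k) = s • (1 : A) := by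
      rcases eq_or_lt_of_le (show (2 : ℤ) ≤ k by omega) with h | h
      · exact ⟨s₀, by rw [show (2 : ℤ) - k = 0 by omega]; exact hs₀⟩
      · exact ⟨0, by rw [hΘneg _ (by omega), zero_smul]⟩
    have key := IdA 0 k l
    rw [h2 0 (k + 1), h2 (0 + 1) k, h2 0 k, h2 (0 + 1) (k + 1)] at key
    rw [show k + 1 - 0 + 1 = k + 2 by ring, show k + 1 - 0 - 1 = k by ring,
      show (0 : ℤ) - (k + 1) + 1 = -k by ring, show (0 : ℤ) - (k + 1) - 1 = -k - 2 by ring,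
      show k - (0 + 1) + 1 = k by ring, show k - (0 + 1) - 1 = k - 2 by ring,
      show (0 : ℤ) + 1 - k + 1 = 2 - k by ring, show (0 : ℤ) + 1 - k - 1 = -k by ring,
      show k - 0 + 1 = k + 1 by ring, show k - 0 - 1 = k - 1 by ring,
      show (0 : ℤ) - k + 1 = 1 - k by ring, show (0 : ℤ) - k - 1 = -k - 1 by ring,
      show k + 1 - (0 + 1) + 1 = k + 1 by ring, show k + 1 - (0 + 1) - 1 = k - 1 by ring,
      show (0 : ℤ) + 1 - (k + 1) + 1 = 1 - k by ring,
      show (0 : ℤ) + 1 - (k + 1) - 1 = -k - 1 by ring,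
      hΘneg (-k) (by omega), hΘneg (-k - 2) (by omega), hΘneg (1 - k) (by omega),
      hΘneg (-k - 1) (by omega), hs] at key
    simp only [zero_mul, smul_zero, sub_zero, add_zero, zero_add, zpow_zero, Units.val_one,
      one_mul, mul_one, zpow_one, smul_mul_assoc, one_smul,
      show ((C ^ ((1 : ℤ) + 1) : Aˣ) : A) = (C : A) * (C : A) by
        rw [zpow_add, zpow_one, Units.val_mul]] at key
    have key2 := congrArg (fun z : A => (w ^ 2 : S) • z) key
    simp only [smul_zero] at key2
    rw [← key2]
    simp only [gY, gqbr, show k + 2 - 2 = k by ring, show k + 2 - 1 = k + 1 by ring]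
    simp only [mul_add, add_mul, mul_sub, sub_mul, smul_add, smul_sub, smul_smul,
      mul_smul_comm, smul_mul_assoc, mul_assoc, one_smul, one_mul, mul_one,
      zero_mul, mul_zero, smul_zero, add_zero, zero_add, sub_zero, zero_sub, neg_zero,
      hCB, hCB', hKB, hKB', hCT, hCT', hKT, hKT', hCzB, hCzB']
    match_scalars <;> (try field_simp) <;> (try ring)
  · -- case k = 0
    subst hk
    have key := IdA 0 0 l
    rw [h2 0 (0 + 1), h2 (0 + 1) 0, h2 0 0, h2 (0 + 1) (0 + 1)] at key
    rw [show (0 : ℤ) + 1 - 0 + 1 = 2 by ring, show (0 : ℤ) + 1 - 0 - 1 = 0 by ring,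
      show (0 : ℤ) - (0 + 1) + 1 = 0 by ring, show (0 : ℤ) - (0 + 1) - 1 = -2 by ring,
      show (0 : ℤ) - 0 + 1 = 1 by ring, show (0 : ℤ) - 0 - 1 = -1 by ring,
      show (0 : ℤ) + 1 - (0 + 1) + 1 = 1 by ring, show (0 : ℤ) + 1 - (0 + 1) - 1 = -1 by ring,
      hΘneg (-2) (by omega), hΘneg (-1) (by omega), hs₀] at key
    simp only [zero_mul, smul_zero, sub_zero, add_zero, zero_add, zpow_zero, Units.val_one,
      one_mul, mul_one, zpow_one, smul_mul_assoc, one_smul,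
      show ((C ^ ((1 : ℤ) + 1) : Aˣ) : A) = (C : A) * (C : A) by
        rw [zpow_add, zpow_one, Units.val_mul]] at key
    have key2 := congrArg (fun z : A => (w ^ 2 / 2 : S) • z) key
    simp only [smul_zero] at key2
    rw [← key2]
    simp only [gY, gqbr, show (0 : ℤ) + 2 - 2 = 0 by ring, show (0 : ℤ) + 2 - 1 = 1 by ring,
      show (0 : ℤ) + 2 = 2 by ring, show (2 : ℤ) - 2 = 0 by ring, show (2 : ℤ) - 1 = 1 by ring,
      show (0 : ℤ) - 2 = -2 by ring, show (0 : ℤ) - 1 = -1 by ring,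
      hΘneg (-2) (by omega), hΘneg (-1) (by omega), hs₀]
    simp only [mul_add, add_mul, mul_sub, sub_mul, smul_add, smul_sub, smul_smul,
      mul_smul_comm, smul_mul_assoc, mul_assoc, one_smul, one_mul, mul_one,
      zero_mul, mul_zero, smul_zero, add_zero, zero_add, sub_zero, zero_sub, neg_zero,
      hCB, hCB', hKB, hKB', hCT, hCT', hKT, hKT', hCzB, hCzB']
    match_scalars <;> (try field_simp) <;> (try ring)

/-- The recursion `Y_{k+2,l} = v⁻² Y_{k,l} C` for `k > 1` or `k = 0`, assuming the relations
(iDRG2') and (iDRG3'). -/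
theorem stmt13 {A : Type*} [Ring A] [Algebra F A] (C K : Aˣ)
    (hC : ∀ x : A, (C : A) * x = x * (C : A)) (hK : ∀ x : A, (K : A) * x = x * (K : A))
    (B B' : ℤ → A) (Θ : ℤ → A)
    (hΘ0 : Θ 0 = (v - v⁻¹)⁻¹ • (1 : A)) (hΘneg : ∀ m : ℤ, m < 0 → Θ m = 0)
    (c : ℤ) (hc : c ≤ 0) (a : F) (ha : a = v ^ c)
    (h1 : ∀ k l : ℤ, qbr a⁻¹ (B k) (B' (l + 1)) - a⁻¹ • qbr a (B (k + 1)) (B' l) = 0)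
    (h2 : ∀ k l : ℤ,
      qbr (v⁻¹ ^ 2) (B k) (B (l + 1)) - (v⁻¹ ^ 2) • qbr (v ^ 2) (B (k + 1)) (B l)
        = (v⁻¹ ^ 2) • (Θ (l - k + 1) * ((C ^ k : Aˣ) : A) * (K : A))
          - (v⁻¹ ^ 4) • (Θ (l - k - 1) * ((C ^ (k + 1) : Aˣ) : A) * (K : A))
          + (v⁻¹ ^ 2) • (Θ (k - l + 1) * ((C ^ l : Aˣ) : A) * (K : A))
          - (v⁻¹ ^ 4) • (Θ (k - l - 1) * ((C ^ (l + 1) : Aˣ) : A) * (K : A))) :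
    ∀ l k : ℤ, (1 < k ∨ k = 0) →
      Ydef Θ B' C a (k + 2) l = (v⁻¹ ^ 2) • (Ydef Θ B' C a k l * (C : A)) := by
  have hv : v ≠ 0 := RatFunc.X_ne_zero
  have ha0 : a ≠ 0 := by rw [ha]; exact zpow_ne_zero _ hv
  have h2F : (2 : F) ≠ 0 := by
    have h : ((algebraMap (Polynomial ℚ) (RatFunc ℚ)) 2) ≠ 0 :=
      RatFunc.algebraMap_ne_zero (by norm_num)
    rwa [map_ofNat] at h
  exact aux C K hC hK B B' Θ v hv h2F ⟨(v - v⁻¹)⁻¹, hΘ0⟩ hΘneg a ha0 h1 h2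

end
end

section
/- Let A be an associative ℚ(v)-algebra with invertible central elements C, K and elements B_k (k ∈ ℤ), B'_l (l ∈ ℤ) satisfying, for a = v^{-1} (i.e. c_{ij} = −1): (i) [B_k, B'_{l+1}]_v − v·[B_{k+1}, B'_l]_{v^{-1}} = 0 for all k, l; (ii) the q-Serre relations [B_k, [B_k, B'_l]_v]_{v^{-1}} = −v^{-1}·B'_l·K·C^k and [[B'_l, B_k]_v, B_k]_{v^{-1}} = −v^{-1}·B'_l·K·C^k for all k, l. Define Θ₁ := −[B₁, B₀]_{v²}·K^{-1}. Then [Θ₁, B'₀]·K = B'_{−1}·K·C − B'₁·K. -/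
noncomputable section

/-- Base case `Y_{1,0} = 0` in the `c_{ij} = -1` case:
with `Θ₁ := -[B₁,B₀]_{v²} K⁻¹`, one has `[Θ₁, B'₀] K = B'_{-1} K C - B'₁ K`. -/
theorem stmt14 {A : Type*} [Ring A] [Algebra F A] (C K : Aˣ)
    (hC : ∀ x : A, (C : A) * x = x * (C : A)) (hK : ∀ x : A, (K : A) * x = x * (K : A))
    (B B' : ℤ → A)
    (h1 : ∀ k l : ℤ, qbr v (B k) (B' (l + 1)) - v • qbr v⁻¹ (B (k + 1)) (B' l) = 0)
    (h2a : ∀ k l : ℤ, qbr v⁻¹ (B k) (qbr v (B k) (B' l))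
        = -(v⁻¹ • (B' l * (K : A) * ((C ^ k : Aˣ) : A))))
    (h2b : ∀ k l : ℤ, qbr v⁻¹ (qbr v (B' l) (B k)) (B k)
        = -(v⁻¹ • (B' l * (K : A) * ((C ^ k : Aˣ) : A))))
    (Θ₁ : A) (hΘ₁ : Θ₁ = -(qbr (v ^ 2) (B 1) (B 0) * ((K⁻¹ : Aˣ) : A))) :
    qbr 1 Θ₁ (B' 0) * (K : A) = B' (-1) * (K : A) * (C : A) - B' 1 * (K : A) := by
  have hv : (v : F) ≠ 0 := RatFunc.X_ne_zero
  have hvv : v * v⁻¹ = 1 := mul_inv_cancel₀ hv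
  -- clean form of h1 at (0,0)
  have e1 : B 0 * B' 1 - v • (B' 1 * B 0) - v • (B 1 * B' 0) + B' 0 * B 1 = 0 := by
    have h := h1 0 0
    simp only [qbr, zero_add, smul_sub, smul_smul, hvv, one_smul] at h
    linear_combination (norm := abel1) h
  -- clean form of h1 at (0,-1)
  have e2 : B 0 * B' 0 - v • (B' 0 * B 0) - v • (B 1 * B' (-1)) + B' (-1) * B 1 = 0 := by
    have h := h1 0 (-1)
    norm_num [qbr, smul_sub, smul_smul, hvv] at h
    linear_combination (norm := abel1) h
  -- clean form of h2a at (0,1), multiplied by v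
  have s1 : v • (B 0 * (B 0 * B' 1)) - (v ^ 2) • (B 0 * (B' 1 * B 0))
      - B 0 * B' 1 * B 0 + v • (B' 1 * B 0 * B 0) = -(B' 1 * (K : A)) := by
    have h := congrArg (fun x : A => v • x) (h2a 0 1)
    simp only [qbr, zpow_zero, Units.val_one, mul_one, smul_sub, smul_neg, smul_smul, hvv, inv_mul_cancel₀ hv, mul_one,
      one_smul, mul_sub, sub_mul, smul_mul_assoc, mul_smul_comm, ← sq] at h
    linear_combination (norm := abel1) h
  -- clean form of h2a at (1,-1), multiplied by v
  have s2 : v • (B 1 * (B 1 * B' (-1))) - (v ^ 2) • (B 1 * (B' (-1) * B 1))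
      - B 1 * B' (-1) * B 1 + v • (B' (-1) * B 1 * B 1) = -(B' (-1) * (K : A) * (C : A)) := by
    have h := congrArg (fun x : A => v • x) (h2a 1 (-1))
    simp only [qbr, zpow_one, smul_sub, smul_neg, smul_smul, hvv, inv_mul_cancel₀ hv, mul_one,
      one_smul, mul_sub, sub_mul, smul_mul_assoc, mul_smul_comm, ← sq] at h
    linear_combination (norm := abel1) h
  -- the free-algebra identity combining everything
  have key : (B 1 * B 0 - (v ^ 2) • (B 0 * B 1)) * B' 0
        - B' 0 * (B 1 * B 0 - (v ^ 2) • (B 0 * B 1))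
        - (B' 1 * (K : A) - B' (-1) * (K : A) * (C : A))
      = B 1 * (B 0 * B' 0 - v • (B' 0 * B 0) - v • (B 1 * B' (-1)) + B' (-1) * B 1)
        + v • (B 0 * (B 0 * B' 1 - v • (B' 1 * B 0) - v • (B 1 * B' 0) + B' 0 * B 1))
        - v • ((B 0 * B' 0 - v • (B' 0 * B 0) - v • (B 1 * B' (-1)) + B' (-1) * B 1) * B 1)
        - (B 0 * B' 1 - v • (B' 1 * B 0) - v • (B 1 * B' 0) + B' 0 * B 1) * B 0
        - (v • (B 0 * (B 0 * B' 1)) - (v ^ 2) • (B 0 * (B' 1 * B 0))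
            - B 0 * B' 1 * B 0 + v • (B' 1 * B 0 * B 0) - (-(B' 1 * (K : A))))
        + (v • (B 1 * (B 1 * B' (-1))) - (v ^ 2) • (B 1 * (B' (-1) * B 1))
            - B 1 * B' (-1) * B 1 + v • (B' (-1) * B 1 * B 1)
            - (-(B' (-1) * (K : A) * (C : A)))) := by
    simp only [mul_add, add_mul, mul_sub, sub_mul, neg_mul, mul_neg, smul_mul_assoc,
      mul_smul_comm, mul_assoc, smul_sub, smul_add, smul_neg, smul_smul, ← sq]
    abel1
  have main : (B 1 * B 0 - (v ^ 2) • (B 0 * B 1)) * B' 0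
        - B' 0 * (B 1 * B 0 - (v ^ 2) • (B 0 * B 1))
        - (B' 1 * (K : A) - B' (-1) * (K : A) * (C : A)) = 0 := by
    rw [key, e1, e2, s1, s2]
    simp
  -- commutation of K⁻¹
  have hK' : ∀ x : A, ((K⁻¹ : Aˣ) : A) * x = x * ((K⁻¹ : Aˣ) : A) := by
    intro x
    have h := congrArg (fun y : A => ((K⁻¹ : Aˣ) : A) * y * ((K⁻¹ : Aˣ) : A)) (hK x)
    simpa [mul_assoc, ← mul_assoc, Units.inv_mul, Units.mul_inv] using h.symm
  subst hΘ₁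
  have lhsEq : qbr 1 (-(qbr (v ^ 2) (B 1) (B 0) * ((K⁻¹ : Aˣ) : A))) (B' 0) * (K : A)
      = -((B 1 * B 0 - (v ^ 2) • (B 0 * B 1)) * B' 0)
        + B' 0 * (B 1 * B 0 - (v ^ 2) • (B 0 * B 1)) := by
    simp only [qbr, one_smul, neg_mul, mul_neg, sub_neg_eq_add, sub_mul, add_mul,
      mul_assoc, hK', Units.inv_mul, Units.mul_inv, mul_one]
  rw [lhsEq]
  linear_combination (norm := abel1) -main

end
end
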